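/- arXiv:2010.02564 — 3 statements merged into one kernel-verified Lean document; each statement's English description precedes it below -/
import Mathlib

section
/- Consider the extended Cell Transmission Model with time step T > 0, cell length L = V·T, free-flow speed V > 0 and congestion wave speed W satisfying 0 < W ≤ V. Suppose at time t all densities satisfy 0 ≤ ρ_i(t) ≤ P for i = 1, …, N+1 (where ρ_{N+1} is the downstream boundary density), the interface flows are q_i(t) = min(U_i(t)·ρ_i(t), Q_i(t), W·(P − ρ_{i+1}(t))) for i = 1, …, N with 0 ≤ U_i(t) ≤ V and Q_i(t) ≥ 0, and the inflow satisfies 0 ≤ q_0(t) ≤ W·(P − ρ_1(t)). Then the updated densities ρ_i(t+1) = ρ_i(t) + (T/L)·(q_{i−1}(t) − q_i(t)) again satisfy 0 ≤ ρ_i(t+1) ≤ P for all i = 1, …, N. That is, the physically admissible density interval [0, P] is invariant under the model. -/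
/-!
Since `T / L = 1 / V`, the update of cell `i` reads `ρ' = ρ + (q_in − q_out) / V`. The outflow
is at most the demand `U ρ ≤ V ρ`, so the cell cannot empty below `0`; the inflow is at most
the supply `W (P − ρ) ≤ V (P − ρ)` of the cell, so it cannot fill beyond `P`.
-/

def ctmFlow (U Q W P ρ ρₙ : ℝ) : ℝ := min (U * ρ) (min Q (W * (P - ρₙ)))

theorem ctmFlow_nonneg {U Q W P ρ ρₙ : ℝ} (hU : 0 ≤ U) (hρ : 0 ≤ ρ) (hQ : 0 ≤ Q)
    (hW : 0 ≤ W) (hρₙ : ρₙ ≤ P) : 0 ≤ ctmFlow U Q W P ρ ρₙ :=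
  le_min (mul_nonneg hU hρ) (le_min hQ (mul_nonneg hW (sub_nonneg.mpr hρₙ)))

theorem ctmFlow_le_mul_of_le {U Q W P ρ ρₙ V : ℝ} (hUV : U ≤ V) (hρ : 0 ≤ ρ) :
    ctmFlow U Q W P ρ ρₙ ≤ V * ρ :=
  (min_le_left _ _).trans (mul_le_mul_of_nonneg_right hUV hρ)

theorem ctmFlow_le_supply (U Q W P ρ ρₙ : ℝ) : ctmFlow U Q W P ρ ρₙ ≤ W * (P - ρₙ) :=
  (min_le_right _ _).trans (min_le_right _ _)

theorem cell_update_mem_Icc {V W P ρ qin qout : ℝ} (hV : 0 < V) (hWV : W ≤ V)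
    (hρ : ρ ∈ Set.Icc 0 P) (hqin : qin ∈ Set.Icc 0 (W * (P - ρ)))
    (hqout : qout ∈ Set.Icc 0 (V * ρ)) :
    ρ + V⁻¹ * (qin - qout) ∈ Set.Icc 0 P := by
  have hsupply : qin ≤ V * (P - ρ) :=
    hqin.2.trans (mul_le_mul_of_nonneg_right hWV (sub_nonneg.mpr hρ.2))
  have hmul : V * (ρ + V⁻¹ * (qin - qout)) = V * ρ + (qin - qout) := by
    field_simp
  constructor
  · refine nonneg_of_mul_nonneg_right ?_ hV
    rw [hmul]
    linarith [hqin.1, hqout.2]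
  · refine le_of_mul_le_mul_left ?_ hV
    rw [hmul]
    linarith [hqout.1]

/-- Invariance of the physically admissible density interval
`[0, P]` under the extended CTM with `L = V·T`, `0 < W ≤ V`, flows given by
the min-formula, speeds `U i ∈ [0, V]`, capacities `Q i ≥ 0`, and admissible
inflow `0 ≤ q 0 ≤ W(P − ρ 1)`. -/
theorem ctm_density_interval_invariant
    (N : ℕ) (T L V W P : ℝ)
    (hT : 0 < T) (hV : 0 < V) (hL : L = V * T)
    (hW : 0 < W) (hWV : W ≤ V)
    (ρ ρ' U Q q : ℕ → ℝ)
    (hρ : ∀ i ∈ Finset.Icc 1 (N + 1), 0 ≤ ρ i ∧ ρ i ≤ P)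
    (hq : ∀ i ∈ Finset.Icc 1 N,
      q i = min (U i * ρ i) (min (Q i) (W * (P - ρ (i + 1)))))
    (hU : ∀ i ∈ Finset.Icc 1 N, 0 ≤ U i ∧ U i ≤ V)
    (hQ : ∀ i ∈ Finset.Icc 1 N, 0 ≤ Q i)
    (hq0 : 0 ≤ q 0 ∧ q 0 ≤ W * (P - ρ 1))
    (hupd : ∀ i ∈ Finset.Icc 1 N, ρ' i = ρ i + (T / L) * (q (i - 1) - q i)) :
    ∀ i ∈ Finset.Icc 1 N, 0 ≤ ρ' i ∧ ρ' i ≤ P := by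
  have hnext : ∀ i ∈ Finset.Icc 1 N, 0 ≤ ρ (i + 1) ∧ ρ (i + 1) ≤ P := fun i hi =>
    hρ (i + 1) (by simp only [Finset.mem_Icc] at hi ⊢; omega)
  have hflow_nonneg : ∀ i ∈ Finset.Icc 1 N, 0 ≤ q i := fun i hi =>
    (hq i hi).symm ▸ ctmFlow_nonneg (hU i hi).1 (hρ i (Finset.Icc_subset_Icc_right
      N.le_succ hi)).1 (hQ i hi) hW.le (hnext i hi).2
  intro i hi
  have hcell := hρ i (Finset.Icc_subset_Icc_right N.le_succ hi)
  have hinflow : 0 ≤ q (i - 1) ∧ q (i - 1) ≤ W * (P - ρ i) := by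
    obtain ⟨hi1, hiN⟩ := Finset.mem_Icc.mp hi
    obtain rfl | hlt := hi1.eq_or_lt
    · exact hq0
    have hprev : i - 1 ∈ Finset.Icc 1 N := Finset.mem_Icc.mpr ⟨by omega, by omega⟩
    refine ⟨hflow_nonneg _ hprev, ?_⟩
    rw [hq _ hprev, Nat.sub_add_cancel hi1]
    exact ctmFlow_le_supply _ _ _ _ _ _
  have houtflow : 0 ≤ q i ∧ q i ≤ V * ρ i :=
    ⟨hflow_nonneg i hi, (hq i hi).symm ▸ ctmFlow_le_mul_of_le (hU i hi).2 hcell.1⟩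
  rw [hupd i hi, hL, div_mul_cancel_right₀ hT.ne']
  exact cell_update_mem_Icc hV hWV hcell hinflow houtflow
end

section
/- Let V, W, P, σ be positive reals with 0 < σ < P and V·σ = W·(P − σ), and let α ∈ (0, 1]. For a stop-and-go wave of density ρ_c ∈ (σ, P], define the discharged density ρ_d = (W/V)·(P − (1−α)·σ − α·ρ_c). Then (1−α)·σ ≤ ρ_d < σ, and ρ_d is strictly decreasing as a function of ρ_c on (σ, P]. Consequently the discharging flow V·ρ_d is strictly smaller than the road capacity V·σ, i.e., traffic downstream of a stop-and-go wave flows below capacity. -/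
/-! With `k = W/V`, the fundamental-diagram relation `V σ = W (P − σ)` reads `k (P − σ) = σ`, so
the discharged density is affine in `ρ_c` with slope `−k α` and rewrites as
`ρ_d = σ − k α (ρ_c − σ)` and as `ρ_d = (1 − α) σ + k α (P − ρ_c)`.
Both bounds and the monotonicity are read off these two forms. -/

noncomputable def dischargedDensity (V W P σ α ρc : ℝ) : ℝ := (W / V) * (P - (1 - α) * σ - α * ρc)

section

variable {V W P σ α : ℝ}

lemma dischargedDensity_eq_sub_mul (hV : V ≠ 0) (hfd : V * σ = W * (P - σ)) (ρc : ℝ) :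
    dischargedDensity V W P σ α ρc = σ - W / V * α * (ρc - σ) := by
  unfold dischargedDensity
  field_simp
  linear_combination -hfd

lemma dischargedDensity_eq_add_mul (hV : V ≠ 0) (hfd : V * σ = W * (P - σ)) (ρc : ℝ) :
    dischargedDensity V W P σ α ρc = (1 - α) * σ + W / V * α * (P - ρc) := by
  unfold dischargedDensity
  field_simp
  linear_combination (α - 1) * hfd

lemma strictAnti_dischargedDensity (hV : 0 < V) (hW : 0 < W) (hα : 0 < α) :
    StrictAnti (dischargedDensity V W P σ α) := by
  intro a b hab
  unfold dischargedDensity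
  have hk : 0 < W / V := div_pos hW hV
  gcongr

end

theorem discharged_density_below_critical_general
    (V W P σ α ρc ρd : ℝ)
    (hV : 0 < V) (hW : 0 < W)
    (hfd : V * σ = W * (P - σ))
    (hα : α ∈ Set.Ioc (0 : ℝ) 1)
    (hρc : ρc ∈ Set.Ioc σ P)
    (hρd : ρd = (W / V) * (P - (1 - α) * σ - α * ρc)) :
    (1 - α) * σ ≤ ρd ∧ ρd < σ
    ∧ StrictAntiOn (fun r => (W / V) * (P - (1 - α) * σ - α * r)) (Set.Ioc σ P)
    ∧ V * ρd < V * σ := by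
  obtain ⟨hα₀, -⟩ := hα
  obtain ⟨hσρc, hρcP⟩ := hρc
  have hk : 0 < W / V * α := mul_pos (div_pos hW hV) hα₀
  change ρd = dischargedDensity V W P σ α ρc at hρd
  have hlt : ρd < σ := by
    rw [hρd, dischargedDensity_eq_sub_mul hV.ne' hfd]
    linarith [mul_pos hk (sub_pos.2 hσρc)]
  refine ⟨?_, hlt, (strictAnti_dischargedDensity hV hW hα₀).strictAntiOn _, by gcongr⟩
  rw [hρd, dischargedDensity_eq_add_mul hV.ne' hfd]
  linarith [mul_nonneg hk.le (sub_nonneg.2 hρcP)]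

/-- For a stop-and-go wave of density `ρ_c ∈ (σ, P]`, the
discharged density `ρ_d = (W/V)(P − (1−α)σ − αρ_c)` satisfies
`(1−α)σ ≤ ρ_d < σ`, is strictly decreasing in `ρ_c`, and the discharging
flow `V·ρ_d` is strictly below the capacity `V·σ`. -/
theorem discharged_density_below_critical
    (V W P σ α ρc ρd : ℝ)
    (hV : 0 < V) (hW : 0 < W) (hP : 0 < P)
    (hσ : 0 < σ) (hσP : σ < P)
    (hfd : V * σ = W * (P - σ))
    (hα : α ∈ Set.Ioc (0 : ℝ) 1)
    (hρc : ρc ∈ Set.Ioc σ P)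
    (hρd : ρd = (W / V) * (P - (1 - α) * σ - α * ρc)) :
    (1 - α) * σ ≤ ρd ∧ ρd < σ
    ∧ StrictAntiOn (fun r => (W / V) * (P - (1 - α) * σ - α * r)) (Set.Ioc σ P)
    ∧ V * ρd < V * σ :=
  discharged_density_below_critical_general V W P σ α ρc ρd hV hW hfd hα hρc hρd
end

section
/- Let V, σ, σ_b, ρ_d, λ_d, ρ̄ be reals with s := σ − σ_b, s < ρ_d, s < ρ̄, and λ_d < V. Suppose d, n : ℝ → ℝ are differentiable and, for a constant actuator speed u, satisfy the linear dynamics d′(t) = λ_d − u and n′(t) = (V − u)·s − (V − λ_d)·ρ_d, with initial conditions d(0) > 0 and n(0) = ρ̄·d(0) (the number of vehicles between the actuator and the wave front equals the average density times the gap). If u is chosen as u = (V·(ρ_d − s) + λ_d·(ρ̄ − ρ_d)) / (ρ̄ − s), then u > λ_d, and at the time θ = d(0)/(u − λ_d) > 0 both quantities vanish simultaneously: d(θ) = 0 and n(θ) = 0. Moreover, this u is the unique constant speed for which n and d vanish at the same positive time. -/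
/-!
Both `d` and `n` are affine in time, so they vanish at a common positive time exactly when
`n' = ρ̄ d'`, i.e. when the density `n / d` stays equal to its initial value `ρ̄`. This balance
condition is linear in `u` with leading coefficient `ρ̄ - (σ - σ_b) > 0`, so it has exactly one
solution, and the hypotheses on the densities and on `λ_d` make that solution exceed `λ_d`.
-/

lemma eq_add_mul_of_deriv_eq {f : ℝ → ℝ} {c : ℝ} (hf : Differentiable ℝ f)
    (hf' : ∀ t, deriv f t = c) (t : ℝ) : f t = f 0 + c * t := by
  have hderiv : ∀ x, deriv (fun t => f t - c * t) x = 0 := fun x => by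
    rw [((hf x).hasDerivAt.fun_sub ((hasDerivAt_id' x).const_mul c)).deriv, hf', mul_one, sub_self]
  have h : f t - c * t = f 0 - c * 0 :=
    is_const_of_deriv_eq_zero (hf.sub (differentiable_id.const_mul c)) hderiv t 0
  linarith

lemma slope_eq_mul_of_common_root {a p q ρ θ : ℝ} (h₁ : a + p * θ = 0)
    (h₂ : ρ * a + q * θ = 0) (hθ : θ ≠ 0) : q = ρ * p := by
  have h : (q - ρ * p) * θ = 0 := by linear_combination h₂ - ρ * h₁
  exact sub_eq_zero.1 ((mul_eq_zero.1 h).resolve_right hθ)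

/-- The speed `u` of the statement, written with `s = σ - σ_b`. -/
noncomputable def dissipatingSpeed (V s ρd lamd ρbar : ℝ) : ℝ :=
  (V * (ρd - s) + lamd * (ρbar - ρd)) / (ρbar - s)

section Speed

variable {V s ρd lamd ρbar u : ℝ}

lemma netFlow_eq_mul_iff (hs : s < ρbar) :
    (V - u) * s - (V - lamd) * ρd = ρbar * (lamd - u) ↔
      u = dissipatingSpeed V s ρd lamd ρbar := by
  rw [dissipatingSpeed, eq_div_iff (sub_pos.2 hs).ne']
  constructor <;> intro h <;> linarith

lemma lt_dissipatingSpeed (hρd : s < ρd) (hρbar : s < ρbar) (hlamd : lamd < V) :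
    lamd < dissipatingSpeed V s ρd lamd ρbar := by
  rw [dissipatingSpeed, lt_div_iff₀ (sub_pos.2 hρbar)]
  nlinarith [mul_pos (sub_pos.2 hlamd) (sub_pos.2 hρd)]

end Speed

/-- With gap dynamics `d' = λ_d − u` and vehicle-count dynamics
`n' = (V−u)(σ−σ_b) − (V−λ_d)ρ_d`, initial data `d(0) > 0`, `n(0) = ρ̄·d(0)`,
the speed `u = (V(ρ_d−s) + λ_d(ρ̄−ρ_d))/(ρ̄−s)` (with `s = σ−σ_b`) satisfies
`u > λ_d` and makes `d` and `n` vanish simultaneously at the positive time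
`θ = d(0)/(u−λ_d)`; moreover it is the unique such constant speed. -/
theorem actuator_speed_dissipates_wave
    (V σ σb ρd lamd ρbar u : ℝ) (d n : ℝ → ℝ)
    (hρd : σ - σb < ρd) (hρbar : σ - σb < ρbar) (hlamd : lamd < V)
    (hdiff_d : Differentiable ℝ d) (hdiff_n : Differentiable ℝ n)
    (hd' : ∀ t, deriv d t = lamd - u)
    (hn' : ∀ t, deriv n t = (V - u) * (σ - σb) - (V - lamd) * ρd)
    (hd0 : 0 < d 0) (hn0 : n 0 = ρbar * d 0)
    (hu : u = (V * (ρd - (σ - σb)) + lamd * (ρbar - ρd)) / (ρbar - (σ - σb))) :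
    lamd < u
    ∧ 0 < d 0 / (u - lamd)
    ∧ d (d 0 / (u - lamd)) = 0
    ∧ n (d 0 / (u - lamd)) = 0
    ∧ ∀ (u2 : ℝ) (d2 n2 : ℝ → ℝ),
        Differentiable ℝ d2 → Differentiable ℝ n2 →
        (∀ t, deriv d2 t = lamd - u2) →
        (∀ t, deriv n2 t = (V - u2) * (σ - σb) - (V - lamd) * ρd) →
        d2 0 = d 0 → n2 0 = n 0 →
        (∃ θ > (0 : ℝ), d2 θ = 0 ∧ n2 θ = 0) →
        u2 = u := by
  replace hu : u = dissipatingSpeed V (σ - σb) ρd lamd ρbar := hu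
  have hlt : lamd < u := hu ▸ lt_dissipatingSpeed hρd hρbar hlamd
  have hdθ : d (d 0 / (u - lamd)) = 0 := by
    rw [eq_add_mul_of_deriv_eq hdiff_d hd']
    field_simp [(sub_pos.2 hlt).ne']
    ring
  have hflow := (netFlow_eq_mul_iff hρbar).2 hu
  refine ⟨hlt, div_pos hd0 (sub_pos.2 hlt), hdθ, ?_, ?_⟩
  · rw [eq_add_mul_of_deriv_eq hdiff_n hn', hn0, hflow, mul_assoc, ← mul_add,
      ← eq_add_mul_of_deriv_eq hdiff_d hd', hdθ, mul_zero]
  · rintro u2 d2 n2 hdiff_d2 hdiff_n2 hd2' hn2' hd20 hn20 ⟨θ, hθ, hd2θ, hn2θ⟩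
    rw [eq_add_mul_of_deriv_eq hdiff_d2 hd2', hd20] at hd2θ
    rw [eq_add_mul_of_deriv_eq hdiff_n2 hn2', hn20, hn0] at hn2θ
    rw [hu]
    exact (netFlow_eq_mul_iff hρbar).1 (slope_eq_mul_of_common_root hd2θ hn2θ hθ.ne')
end
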